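/- arXiv:2503.05542 — 2 statements merged into one kernel-verified Lean document; each statement's English description precedes it below -/
import Mathlib

section
/- Let p ∈ ℕ, Σ̂ a p×p real symmetric positive semidefinite matrix, β_0 ∈ ℝ^p, λ ≥ λ′ > 0 and t ≥ 0. Define β_λ := (Σ̂ + λ·I_p)^{-1} Σ̂ β_0 and β_{λ′} := (Σ̂ + λ′·I_p)^{-1} Σ̂ β_0, and write Σ̂_λ := Σ̂ + λ·I_p. Then ⟨Σ̂_λ((I_p + t·Σ̂_λ)^{-1} − exp(−t·Σ̂_λ))β_λ, β_{λ′} − β_λ⟩ ≥ 0; that is, the compatibility condition for the gradient-flow versus ridge comparison holds for the target vector γ = β_{λ′}. -/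
/-!
Every matrix in the statement is a function of `Σ̂` in the sense of the continuous functional
calculus, so the inner product is `⟨F(Σ̂) β₀, G(Σ̂) β₀⟩` for scalar functions `F, G`, and it is
nonnegative as soon as `F · G ≥ 0` on the spectrum of `Σ̂`, which lies in `[0, ∞)`. Here
`F x = s · ((1 + t s)⁻¹ - exp (-t s)) · x / s` with `s = x + λ`, which is nonnegative because
`1 + t s ≤ exp (t s)`, and `G x = x / (x + λ′) - x / (x + λ) ≥ 0` because `λ′ ≤ λ`.
-/

open Matrix

/-- Euclidean inner product on `Fin p → ℝ`. -/
noncomputable def ip {p : ℕ} (v w : Fin p → ℝ) : ℝ := ∑ i, v i * w i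

theorem Real.exp_neg_le_inv_one_add {x : ℝ} (hx : -1 < x) : Real.exp (-x) ≤ (1 + x)⁻¹ := by
  rw [Real.exp_neg]
  exact inv_anti₀ (by linarith) (by linarith [Real.add_one_le_exp x])

namespace Matrix

variable {n : Type*} [Fintype n] [DecidableEq n]

@[fun_prop]
theorem continuousOn_spectrum_real {𝕜 : Type*} [RCLike 𝕜] (f : ℝ → ℝ) (A : Matrix n n 𝕜) :
    ContinuousOn f (spectrum ℝ A) :=
  A.finite_real_spectrum.continuousOn f

theorem exp_eq_cfc {A : Matrix n n ℝ} (hA : IsSelfAdjoint A) :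
    NormedSpace.exp A = cfc Real.exp A := by
  -- `NormedSpace.exp` only sees the topology, so any matrix norm lets us use the CFC lemma.
  let _ : NormedRing (Matrix n n ℝ) := Matrix.linftyOpNormedRing
  let _ : NormedAlgebra ℝ (Matrix n n ℝ) := Matrix.linftyOpNormedAlgebra
  exact (@CFC.real_exp_eq_normedSpace_exp (Matrix n n ℝ) _ _ _
    IsHermitian.instContinuousFunctionalCalculus A hA).symm

open scoped MatrixOrder in
theorem cfc_mulVec_dotProduct_cfc_mulVec_nonneg {A : Matrix n n ℝ} {f g : ℝ → ℝ}
    (hfg : ∀ x ∈ spectrum ℝ A, 0 ≤ f x * g x) (v : n → ℝ) :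
    0 ≤ (cfc f A *ᵥ v) ⬝ᵥ (cfc g A *ᵥ v) := by
  have hfT : (cfc f A)ᵀ = cfc f A := by
    rw [← conjTranspose_eq_transpose_of_trivial]
    exact cfc_predicate f A
  have hpsd : (cfc f A * cfc g A).PosSemidef := by
    rw [← cfc_mul f g A]
    exact nonneg_iff_posSemidef.mp (cfc_nonneg hfg)
  have := hpsd.dotProduct_mulVec_nonneg v
  rwa [star_trivial, ← mulVec_mulVec, dotProduct_mulVec, ← hfT, vecMul_transpose] at this

namespace IsHermitian

variable {A : Matrix n n ℝ}

theorem add_smul_one_eq_cfc (hA : A.IsHermitian) (c : ℝ) : A + c • 1 = cfc (· + c) A := by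
  rw [cfc_add_const c (fun x ↦ x) A (ha := hA.isSelfAdjoint), cfc_id' ℝ A hA.isSelfAdjoint,
    Algebra.algebraMap_eq_smul_one]

theorem inv_cfc (hA : A.IsHermitian) (f : ℝ → ℝ) (hf : ∀ x ∈ spectrum ℝ A, f x ≠ 0) :
    (cfc f A)⁻¹ = cfc (fun x ↦ (f x)⁻¹) A := by
  rw [nonsing_inv_eq_ringInverse, cfc_inv f A hf (ha := hA.isSelfAdjoint)]

theorem cfc_comp (hA : A.IsHermitian) (g f : ℝ → ℝ) : cfc (g ∘ f) A = cfc g (cfc f A) :=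
  _root_.cfc_comp g f A hA.isSelfAdjoint ((A.finite_real_spectrum.image f).continuousOn g)

end IsHermitian

namespace PosSemidef

variable {A : Matrix n n ℝ}

theorem nonneg_of_mem_spectrum (hA : A.PosSemidef) {x : ℝ} (hx : x ∈ spectrum ℝ A) : 0 ≤ x :=
  (posSemidef_iff_isHermitian_and_spectrum_nonneg.mp hA).2 hx

theorem inv_add_smul_one_mul_eq_cfc (hA : A.PosSemidef) {c : ℝ} (hc : 0 < c) :
    (A + c • 1)⁻¹ * A = cfc (fun x ↦ x / (x + c)) A := by
  have hne : ∀ x ∈ spectrum ℝ A, x + c ≠ 0 := fun x hx ↦ by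
    linarith [hA.nonneg_of_mem_spectrum hx]
  conv_lhs => rw [hA.1.add_smul_one_eq_cfc, hA.1.inv_cfc _ hne]
  nth_rw 2 [← cfc_id' ℝ A hA.1.isSelfAdjoint]
  rw [← cfc_mul]
  exact cfc_congr fun x _ ↦ by rw [div_eq_inv_mul]

theorem inv_one_add_smul_sub_exp_neg_smul_eq_cfc (hA : A.PosSemidef) {t : ℝ} (ht : 0 ≤ t) :
    (1 + t • A)⁻¹ - NormedSpace.exp (-(t • A)) =
      cfc (fun x ↦ (1 + t * x)⁻¹ - Real.exp (-(t * x))) A := by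
  have hsa := hA.1.isSelfAdjoint
  have hne : ∀ x ∈ spectrum ℝ A, 1 + t * x ≠ 0 := fun x hx ↦ by
    nlinarith [hA.nonneg_of_mem_spectrum hx]
  have hres : 1 + t • A = cfc (fun x ↦ 1 + t * x) A := by
    rw [cfc_const_add 1 (t * ·) A (ha := hsa), cfc_const_mul_id t A hsa, map_one]
  have hneg : -(t • A) = cfc (fun x ↦ -(t * x)) A := by
    rw [cfc_neg _ A, cfc_const_mul_id t A hsa]
  rw [hres, hA.1.inv_cfc _ hne, hneg, exp_eq_cfc (cfc_predicate _ A), ← hA.1.cfc_comp, ← cfc_sub]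
  rfl

end PosSemidef

end Matrix

/-- the compatibility condition for the gradient-flow versus ridge comparison
holds for the target vector `γ = β_{λ′}` whenever `0 < λ′ ≤ λ`. -/
theorem gf_ridge_condition_for_ridge_target
    (p : ℕ) (Sig : Matrix (Fin p) (Fin p) ℝ) (hSig : Sig.PosSemidef)
    (beta0 : Fin p → ℝ) (lam lam' : ℝ) (hlam' : 0 < lam') (hll : lam' ≤ lam)
    (t : ℝ) (ht : 0 ≤ t)
    (Sigl : Matrix (Fin p) (Fin p) ℝ) (hSigl_def : Sigl = Sig + lam • 1)
    (betal betal' : Fin p → ℝ)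
    (hbetal : betal = Sigl⁻¹ *ᵥ (Sig *ᵥ beta0))
    (hbetal' : betal' = (Sig + lam' • 1)⁻¹ *ᵥ (Sig *ᵥ beta0)) :
    0 ≤ ip (Sigl *ᵥ (((1 + t • Sigl)⁻¹ - NormedSpace.exp (-(t • Sigl))) *ᵥ betal))
        (betal' - betal) := by
  have hlam : 0 < lam := hlam'.trans_le hll
  have hSigl_psd : Sigl.PosSemidef := hSigl_def ▸ hSig.add (PosSemidef.one.smul hlam.le)
  have hSigl : Sigl = cfc (· + lam) Sig := hSigl_def ▸ hSig.1.add_smul_one_eq_cfc lam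
  have hgap : (1 + t • Sigl)⁻¹ - NormedSpace.exp (-(t • Sigl)) =
      cfc (fun x ↦ (1 + t * (x + lam))⁻¹ - Real.exp (-(t * (x + lam)))) Sig := by
    rw [hSigl_psd.inv_one_add_smul_sub_exp_neg_smul_eq_cfc ht, hSigl, ← hSig.1.cfc_comp]
    rfl
  have hridge (c : ℝ) (hc : 0 < c) :
      (Sig + c • 1)⁻¹ *ᵥ (Sig *ᵥ beta0) = cfc (fun x ↦ x / (x + c)) Sig *ᵥ beta0 := by
    rw [mulVec_mulVec, hSig.inv_add_smul_one_mul_eq_cfc hc]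
  rw [hbetal', hridge lam' hlam', hbetal, hSigl_def, hridge lam hlam, ← hSigl_def, hgap, hSigl,
    mulVec_mulVec, mulVec_mulVec, ← cfc_mul, ← cfc_mul, ← sub_mulVec, ← cfc_sub]
  refine cfc_mulVec_dotProduct_cfc_mulVec_nonneg (fun x hx ↦ ?_) beta0
  have hx0 : 0 ≤ x := hSig.nonneg_of_mem_spectrum hx
  have hgap_nonneg : 0 ≤ (1 + t * (x + lam))⁻¹ - Real.exp (-(t * (x + lam))) :=
    sub_nonneg.mpr (Real.exp_neg_le_inv_one_add (by nlinarith))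
  have hshrink : x / (x + lam) ≤ x / (x + lam') :=
    div_le_div_of_nonneg_left hx0 (by linarith) (by linarith)
  exact mul_nonneg (mul_nonneg (mul_nonneg (by linarith) hgap_nonneg)
    (div_nonneg hx0 (by linarith))) (sub_nonneg.mpr hshrink)
end

section
/- Let p ∈ ℕ, Σ̂ a p×p real symmetric positive semidefinite matrix with Σ̂ ≠ 0 or λ > 0, λ ≥ λ′ > 0, Σ̂_λ := Σ̂ + λ·I_p, β_0 ∈ ℝ^p, σ ≥ 0, n ∈ ℕ with n ≥ 1. Set β_λ := Σ̂_λ^{−1} Σ̂ β_0, γ := (Σ̂ + λ′·I_p)^{−1} Σ̂ β_0, and for a continuous function R : ℝ → ℝ define the prediction risk 𝓡(R) := ‖Σ̂_λ^{1/2}(R(Σ̂_λ)β_λ + (γ − β_λ))‖² + (σ²/n)·trace((I_p − R(Σ̂_λ))² Σ̂_λ^{−1} Σ̂). Then the oracle gradient-flow risk is bounded by the oracle ridge risk: inf over t ≥ 1/(2‖Σ̂_λ‖_{op}) of 𝓡(x ↦ exp(−t·x)) ≤ 1.2985² · inf over λ̃ ∈ [λ, λ + 2‖Σ̂_λ‖_{op}]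 of 𝓡(x ↦ (λ̃−λ)/((λ̃−λ) + x)). -/
open Matrix

/-- Squared Euclidean norm on `Fin p → ℝ`. -/
noncomputable def sqnorm {p : ℕ} (v : Fin p → ℝ) : ℝ := ∑ i, (v i) ^ 2

/-- The spectral (ℓ²-operator) norm of a real matrix. -/
noncomputable def opNorm {p : ℕ} (M : Matrix (Fin p) (Fin p) ℝ) : ℝ :=
  ‖Matrix.toEuclideanCLM (𝕜 := ℝ) M‖

/-!
Diagonalising `Σ̂_λ`, every matrix in the risk is a function of `Σ̂_λ`, so the risk of a filter `R`
is a sum over the eigenvalues `x ≥ λ` of terms depending on `R` only through `R x`; each term is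
monotone in `R x` (bias, since `λ' ≤ λ`) and in `1 - R x` (variance). For a ridge penalty `λ̃ > λ`
take the time `t = 1 / (λ̃ - λ)`: with `u = t x` one has `e^{-u} ≤ 1 / (1 + u)` and
`1 - e^{-u} ≤ 1.2985 u / (1 + u)`, so each gradient-flow term is at most `1.2985²` times the ridge
term. For `λ̃ = λ` the ridge risk is the limit of the gradient-flow risk as `t → ∞`.

The scalar inequality `(1 - e^{-u}) (1 + u) ≤ 1.2985 u` (whose sharp constant is `1.29843…`) is
checked on a cover of `[0, 3.5]` by intervals, bounding `e^{-u}` below on each by a tangent line at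
a point `m` with a Taylor upper bound for `e^m`; beyond `3.5` it is trivial.
-/

open Finset

open Real Nat in
theorem exp_le_taylor_pow {x : ℝ} {k n : ℕ} (hk : 0 < k) (hn : 0 < n) (hx : 0 ≤ x)
    (hxk : x ≤ k) :
    exp x ≤ (∑ i ∈ range n, (x / k) ^ i / i ! + (x / k) ^ n * (n + 1) / (n ! * n)) ^ k := by
  have hk' : (0 : ℝ) < k := by exact_mod_cast hk
  calc exp x = exp (x / k) ^ k := by rw [← exp_nat_mul]; field_simp
    _ ≤ _ := pow_le_pow_left₀ (exp_pos _).le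
      (exp_bound' (div_nonneg hx hk'.le) ((div_le_one hk').2 hxk) hn) k

open Real in
theorem one_sub_exp_neg_mul_le_of_endpoints {C m E a b u : ℝ} (hE : exp m ≤ E) (ha : 0 ≤ a)
    (hau : a ≤ u) (hub : u ≤ b)
    (hfa : (E - (1 + m - a)) * (1 + a) ≤ C * E * a)
    (hfb : (E - (1 + m - b)) * (1 + b) ≤ C * E * b) :
    (1 - exp (-u)) * (1 + u) ≤ C * u := by
  have hE0 : 0 < E := (exp_pos m).trans_le hE
  have tangent : 1 + m - u ≤ E * exp (-u) := calc
    1 + m - u ≤ exp (m - u) := by linarith [add_one_le_exp (m - u)]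
    _ = exp m * exp (-u) := by rw [← exp_add, sub_eq_add_neg]
    _ ≤ E * exp (-u) := by gcongr
  -- the left side of `hfa`, `hfb` is a convex quadratic in the endpoint
  have convex : (E - (1 + m - u)) * (1 + u) ≤ C * E * u := by
    rcases hau.eq_or_lt with rfl | hau
    · exact hfa
    · nlinarith [mul_nonneg (sub_nonneg.2 hau.le) (sub_nonneg.2 hub)]
  have key : E * ((1 - exp (-u)) * (1 + u)) ≤ E * (C * u) := by nlinarith
  exact le_of_mul_le_mul_left key hE0

open Real in
theorem one_sub_exp_neg_mul_one_add_le {u : ℝ} (hu : 0 ≤ u) :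
    (1 - exp (-u)) * (1 + u) ≤ 1.2985 * u := by
  obtain h₀ | h₀ := le_or_gt u 0.29
  · exact one_sub_exp_neg_mul_le_of_endpoints (m := 0) (E := 1) (by simp) le_rfl hu h₀
      (by norm_num) (by norm_num)
  obtain h₁ | h₁ := le_or_gt u 0.93
  · refine one_sub_exp_neg_mul_le_of_endpoints (m := 0.64) (E := 1.8966)
      ((exp_le_taylor_pow (k := 1) (n := 10) ?_ ?_ ?_ ?_).trans ?_) ?_ h₀.le h₁ ?_ ?_ <;>
      norm_num [sum_range_succ, Nat.factorial]
  obtain h₂ | h₂ := le_or_gt u 1.44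
  · refine one_sub_exp_neg_mul_le_of_endpoints (m := 1.29) (E := 3.6329)
      ((exp_le_taylor_pow (k := 2) (n := 10) ?_ ?_ ?_ ?_).trans ?_) ?_ h₁.le h₂ ?_ ?_ <;>
      norm_num [sum_range_succ, Nat.factorial]
  obtain h₃ | h₃ := le_or_gt u 1.67
  · refine one_sub_exp_neg_mul_le_of_endpoints (m := 1.61) (E := 5.003)
      ((exp_le_taylor_pow (k := 2) (n := 10) ?_ ?_ ?_ ?_).trans ?_) ?_ h₂.le h₃ ?_ ?_ <;>
      norm_num [sum_range_succ, Nat.factorial]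
  obtain h₄ | h₄ := le_or_gt u 1.75
  · refine one_sub_exp_neg_mul_le_of_endpoints (m := 1.72) (E := 5.5847)
      ((exp_le_taylor_pow (k := 2) (n := 10) ?_ ?_ ?_ ?_).trans ?_) ?_ h₃.le h₄ ?_ ?_ <;>
      norm_num [sum_range_succ, Nat.factorial]
  obtain h₅ | h₅ := le_or_gt u 1.8
  · refine one_sub_exp_neg_mul_le_of_endpoints (m := 1.78) (E := 5.93)
      ((exp_le_taylor_pow (k := 2) (n := 10) ?_ ?_ ?_ ?_).trans ?_) ?_ h₄.le h₅ ?_ ?_ <;>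
      norm_num [sum_range_succ, Nat.factorial]
  obtain h₆ | h₆ := le_or_gt u 1.86
  · refine one_sub_exp_neg_mul_le_of_endpoints (m := 1.82) (E := 6.172)
      ((exp_le_taylor_pow (k := 2) (n := 10) ?_ ?_ ?_ ?_).trans ?_) ?_ h₅.le h₆ ?_ ?_ <;>
      norm_num [sum_range_succ, Nat.factorial]
  obtain h₇ | h₇ := le_or_gt u 2.03
  · refine one_sub_exp_neg_mul_le_of_endpoints (m := 1.9) (E := 6.686)
      ((exp_le_taylor_pow (k := 2) (n := 10) ?_ ?_ ?_ ?_).trans ?_) ?_ h₆.le h₇ ?_ ?_ <;>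
      norm_num [sum_range_succ, Nat.factorial]
  obtain h₈ | h₈ := le_or_gt u 2.75
  · refine one_sub_exp_neg_mul_le_of_endpoints (m := 2.17) (E := 8.7584)
      ((exp_le_taylor_pow (k := 3) (n := 10) ?_ ?_ ?_ ?_).trans ?_) ?_ h₇.le h₈ ?_ ?_ <;>
      norm_num [sum_range_succ, Nat.factorial]
  obtain h₉ | h₉ := le_or_gt u 3.5
  · refine one_sub_exp_neg_mul_le_of_endpoints (m := 3.43) (E := 30.8768)
      ((exp_le_taylor_pow (k := 4) (n := 10) ?_ ?_ ?_ ?_).trans ?_) ?_ h₈.le h₉ ?_ ?_ <;>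
      norm_num [sum_range_succ, Nat.factorial]
  nlinarith [exp_pos (-u)]

namespace Matrix.IsHermitian

variable {n 𝕜 : Type*} [RCLike 𝕜] [Fintype n] [DecidableEq n] {A : Matrix n n 𝕜}
  (hA : A.IsHermitian)

lemma cfc_congr {f g : ℝ → ℝ} (h : ∀ i, f (hA.eigenvalues i) = g (hA.eigenvalues i)) :
    hA.cfc f = hA.cfc g := by
  simp only [IsHermitian.cfc, Function.comp_def, h]

lemma cfc_mul (f g : ℝ → ℝ) : hA.cfc (fun x => f x * g x) = hA.cfc f * hA.cfc g := by
  simp only [IsHermitian.cfc, ← map_mul, diagonal_mul_diagonal]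
  congr 2
  ext i
  simp

lemma cfc_add (f g : ℝ → ℝ) : hA.cfc (fun x => f x + g x) = hA.cfc f + hA.cfc g := by
  simp only [IsHermitian.cfc, ← map_add, diagonal_add]
  congr 2
  ext i
  simp

lemma cfc_sub (f g : ℝ → ℝ) : hA.cfc (fun x => f x - g x) = hA.cfc f - hA.cfc g := by
  simp only [IsHermitian.cfc, ← map_sub, diagonal_sub]
  congr 2
  ext i
  simp

lemma cfc_const (c : ℝ) : hA.cfc (fun _ => c) = c • (1 : Matrix n n 𝕜) := by
  simp [IsHermitian.cfc, Function.comp_def, ← smul_one_eq_diagonal]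

lemma cfc_id : hA.cfc (fun x => x) = A := hA.spectral_theorem.symm

lemma cfc_inv {f : ℝ → ℝ} (hf : ∀ i, f (hA.eigenvalues i) ≠ 0) :
    (hA.cfc f)⁻¹ = hA.cfc (fun x => (f x)⁻¹) := by
  refine inv_eq_right_inv ?_
  rw [← cfc_mul, hA.cfc_congr (g := fun _ => 1) fun i => mul_inv_cancel₀ (hf i), cfc_const]
  simp

lemma trace_cfc (f : ℝ → ℝ) : (hA.cfc f).trace = ∑ i, (f (hA.eigenvalues i) : 𝕜) := by
  rw [IsHermitian.cfc, Unitary.conjStarAlgAut_apply, trace_mul_cycle, Unitary.coe_star_mul_self,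
    one_mul, trace_diagonal]
  rfl

open scoped ComplexOrder in
lemma le_eigenvalues {B : Matrix n n 𝕜} (hB : B.PosSemidef) {c : ℝ} (hAB : A = B + c • 1)
    (i : n) : c ≤ hA.eigenvalues i := by
  set v := (hA.eigenvectorBasis i).ofLp
  have hv : star v ⬝ᵥ v = 1 := by
    rw [dotProduct_comm, ← EuclideanSpace.inner_eq_star_dotProduct,
      inner_self_eq_norm_sq_to_K, hA.eigenvectorBasis.orthonormal.1 i]
    simp
  have hAv : A *ᵥ v = B *ᵥ v + c • v := by
    rw [hAB, add_mulVec, smul_mulVec, one_mulVec]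
  have hBv := RCLike.nonneg_iff.1 (hB.dotProduct_mulVec_nonneg v)
  rw [hA.eigenvalues_eq, hAv, dotProduct_add, dotProduct_smul, hv, map_add, RCLike.smul_re,
    RCLike.one_re, mul_one]
  linarith [hBv.1]

end Matrix.IsHermitian

lemma sqnorm_eq_dotProduct {p : ℕ} (v : Fin p → ℝ) : sqnorm v = v ⬝ᵥ v := by
  simp [sqnorm, dotProduct, sq]

lemma sqnorm_unitary_mulVec {p : ℕ} (U : unitaryGroup (Fin p) ℝ) (v : Fin p → ℝ) :
    sqnorm ((U : Matrix (Fin p) (Fin p) ℝ) *ᵥ v) = sqnorm v := by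
  rw [sqnorm_eq_dotProduct, sqnorm_eq_dotProduct, dotProduct_mulVec, ← mulVec_transpose,
    mulVec_mulVec, ← conjTranspose_eq_transpose_of_trivial, ← star_eq_conjTranspose,
    Unitary.coe_star_mul_self, one_mulVec]

lemma Matrix.IsHermitian.sqnorm_cfc_mulVec {p : ℕ} {A : Matrix (Fin p) (Fin p) ℝ}
    (hA : A.IsHermitian) (f : ℝ → ℝ) (v : Fin p → ℝ) :
    sqnorm (hA.cfc f *ᵥ v) = ∑ i, f (hA.eigenvalues i) ^ 2 *
      (star (hA.eigenvectorUnitary : Matrix (Fin p) (Fin p) ℝ) *ᵥ v) i ^ 2 := by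
  rw [IsHermitian.cfc, Unitary.conjStarAlgAut_apply, ← mulVec_mulVec, ← mulVec_mulVec,
    sqnorm_unitary_mulVec, sqnorm]
  simp [mulVec_diagonal, mul_pow]

/-- The risk carried by one eigendirection of `Σ̂_λ`: `x` is its eigenvalue, `w` the coordinate
of `β₀` along it and `r` the value of the residual filter; `(x - λ) / x` and
`(x - λ) / (x - λ + λ')` are the corresponding eigenvalues of `Σ̂_λ⁻¹ Σ̂` and `(Σ̂ + λ')⁻¹ Σ̂`. -/
noncomputable def eigenRisk (lam lam' s x w r : ℝ) : ℝ :=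
  x * ((r * ((x - lam) / x) + ((x - lam) / (x - lam + lam') - (x - lam) / x)) * w) ^ 2
    + s * ((1 - r) ^ 2 * ((x - lam) / x))

lemma risk_eq_sum_eigenRisk {p : ℕ} {lam lam' : ℝ} {Sig Sigl : Matrix (Fin p) (Fin p) ℝ}
    (hA : Sigl.IsHermitian) (hSigl_def : Sigl = Sig + lam • 1) (hlam' : 0 < lam')
    (hll : lam' ≤ lam)
    (hμ : ∀ i, lam ≤ hA.eigenvalues i) {beta0 betal gam : Fin p → ℝ}
    (hbetal : betal = Sigl⁻¹ *ᵥ (Sig *ᵥ beta0))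
    (hgam : gam = (Sig + lam' • 1)⁻¹ *ᵥ (Sig *ᵥ beta0)) (s : ℝ) (R : ℝ → ℝ) :
    sqnorm (hA.cfc Real.sqrt *ᵥ (hA.cfc R *ᵥ betal + (gam - betal)))
      + s * ((1 - hA.cfc R) ^ 2 * Sigl⁻¹ * Sig).trace
      = ∑ i, eigenRisk lam lam' s (hA.eigenvalues i)
          ((star (hA.eigenvectorUnitary : Matrix (Fin p) (Fin p) ℝ) *ᵥ beta0) i)
          (R (hA.eigenvalues i)) := by
  have hpos : ∀ i, 0 < hA.eigenvalues i := fun i => (hlam'.trans_le hll).trans_le (hμ i)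
  have hSig : Sig = hA.cfc (fun x => x - lam) := by
    rw [hA.cfc_sub, hA.cfc_const, hA.cfc_id, hSigl_def, add_sub_cancel_right]
  have hinv : Sigl⁻¹ = hA.cfc (fun x => x⁻¹) := by
    rw [← hA.cfc_inv fun i => (hpos i).ne', hA.cfc_id]
  have hinv' : (Sig + lam' • 1)⁻¹ = hA.cfc (fun x => (x - lam + lam')⁻¹) := by
    rw [← hA.cfc_inv fun i => by linarith [hμ i], hA.cfc_add, hA.cfc_const, hSig]
  have hbias : hA.cfc R *ᵥ betal + (gam - betal) = hA.cfc (fun x =>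
      R x * (x⁻¹ * (x - lam)) + ((x - lam + lam')⁻¹ * (x - lam) - x⁻¹ * (x - lam))) *ᵥ beta0 := by
    rw [hA.cfc_add, hA.cfc_sub, hA.cfc_mul, hA.cfc_mul, hA.cfc_mul, hbetal, hgam, hinv', hinv, hSig]
    simp only [mulVec_mulVec, add_mulVec, sub_mulVec]
  have hvar : (1 - hA.cfc R) ^ 2 * Sigl⁻¹ * Sig =
      hA.cfc (fun x => (1 - R x) * (1 - R x) * x⁻¹ * (x - lam)) := by
    rw [hA.cfc_mul, hA.cfc_mul, hA.cfc_mul, hA.cfc_sub, hA.cfc_const, hinv, hSig, sq, one_smul]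
  rw [hbias, hvar, mulVec_mulVec, ← hA.cfc_mul, hA.sqnorm_cfc_mulVec, hA.trace_cfc, mul_sum,
    ← sum_add_distrib]
  refine sum_congr rfl fun i _ => ?_
  rw [eigenRisk, RCLike.ofReal_real_eq_id, id, mul_pow, mul_pow, Real.sq_sqrt (hpos i).le]
  ring

lemma eigenRisk_nonneg {lam lam' s x : ℝ} (hlam : 0 ≤ lam) (hx : lam ≤ x) (hs : 0 ≤ s)
    (w r : ℝ) : 0 ≤ eigenRisk lam lam' s x w r := by
  have hx0 : 0 ≤ x := hlam.trans hx
  unfold eigenRisk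
  have : 0 ≤ (x - lam) / x := div_nonneg (by linarith) hx0
  positivity

lemma continuous_eigenRisk (lam lam' s x w : ℝ) : Continuous (eigenRisk lam lam' s x w) := by
  unfold eigenRisk
  fun_prop

lemma eigenRisk_le_mul {C lam lam' s x re rr : ℝ} (hC : 1 ≤ C) (hlam' : 0 < lam')
    (hll : lam' ≤ lam) (hx : lam ≤ x) (hs : 0 ≤ s) (hre0 : 0 ≤ re) (hre1 : re ≤ 1)
    (hrerr : re ≤ rr) (hcompl : 1 - re ≤ C * (1 - rr)) (w : ℝ) :
    eigenRisk lam lam' s x w re ≤ C ^ 2 * eigenRisk lam lam' s x w rr := by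
  have hx0 : 0 < x := (hlam'.trans_le hll).trans_le hx
  have hf : 0 ≤ (x - lam) / x := div_nonneg (by linarith) hx0.le
  have hd : 0 ≤ (x - lam) / (x - lam + lam') - (x - lam) / x :=
    sub_nonneg.2 (div_le_div_of_nonneg_left (by linarith) (by linarith) (by linarith))
  have hbias : re * ((x - lam) / x) + ((x - lam) / (x - lam + lam') - (x - lam) / x) ≤
      C * (rr * ((x - lam) / x) + ((x - lam) / (x - lam + lam') - (x - lam) / x)) := by
    linarith [mul_le_mul_of_nonneg_right hrerr hf,
      mul_nonneg (sub_nonneg.2 hC) (add_nonneg (mul_nonneg (hre0.trans hrerr) hf) hd)]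
  calc eigenRisk lam lam' s x w re
      ≤ x * ((C * (rr * ((x - lam) / x) + ((x - lam) / (x - lam + lam') - (x - lam) / x))) * w) ^ 2
        + s * ((C * (1 - rr)) ^ 2 * ((x - lam) / x)) := by
        unfold eigenRisk
        rw [mul_pow, mul_pow _ w]
        have : 0 ≤ 1 - re := by linarith
        gcongr
    _ = C ^ 2 * eigenRisk lam lam' s x w rr := by unfold eigenRisk; ring

open Real in
lemma exp_neg_le_ridge_filter {κ x : ℝ} (hκ : 0 < κ) (hx : 0 ≤ x) :
    exp (-(κ⁻¹ * x)) ≤ κ / (κ + x) := by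
  rw [exp_neg, ← one_div, div_le_div_iff₀ (exp_pos _) (by positivity)]
  have := add_one_le_exp (κ⁻¹ * x)
  field_simp at this ⊢
  nlinarith

open Real in
lemma one_sub_exp_neg_le_mul_one_sub_ridge_filter {κ x : ℝ} (hκ : 0 < κ) (hx : 0 ≤ x) :
    1 - exp (-(κ⁻¹ * x)) ≤ 1.2985 * (1 - κ / (κ + x)) := by
  have key := one_sub_exp_neg_mul_one_add_le (u := κ⁻¹ * x) (by positivity)
  have h1 : 1 + κ⁻¹ * x = (κ + x) / κ := by field_simp
  have h2 : 1 - κ / (κ + x) = κ⁻¹ * x / (1 + κ⁻¹ * x) := by rw [h1]; field_simp; ring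
  rw [h2, mul_div_assoc', le_div_iff₀ (by positivity)]
  exact key

open scoped Pointwise in
theorem Real.le_mul_sInf_of_nonneg {a c : ℝ} {T : Set ℝ} (hc : 0 ≤ c) (hT : T.Nonempty)
    (h : ∀ r ∈ T, a ≤ c * r) : a ≤ c * sInf T := by
  rw [← smul_eq_mul, ← Real.sInf_smul_of_nonneg hc]
  refine le_csInf hT.smul_set ?_
  rintro _ ⟨r, hr, rfl⟩
  exact h r hr

section OracleRisk

open Real Filter Topology

variable {ι : Type*} [Fintype ι] {lam lam' s : ℝ} {μ w : ι → ℝ} {risk : (ℝ → ℝ) → ℝ}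

lemma tendsto_risk_exp_neg_mul_atTop (hμ : ∀ i, 0 < μ i)
    (hrisk : ∀ R, risk R = ∑ i, eigenRisk lam lam' s (μ i) (w i) (R (μ i))) :
    Tendsto (fun t => risk (fun x => exp (-(t * x)))) atTop (𝓝 (risk fun _ => 0)) := by
  simp only [hrisk]
  refine tendsto_finsetSum _ fun i _ => ((continuous_eigenRisk _ _ _ _ _).tendsto 0).comp ?_
  exact tendsto_exp_neg_atTop_nhds_zero.comp (tendsto_id.atTop_mul_const (hμ i))

theorem sInf_risk_exp_le_sInf_risk_ridge (hlam' : 0 < lam') (hll : lam' ≤ lam) (hs : 0 ≤ s)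
    (hμ : ∀ i, lam ≤ μ i)
    (hrisk : ∀ R, risk R = ∑ i, eigenRisk lam lam' s (μ i) (w i) (R (μ i))) {M : ℝ} (hM : 0 ≤ M) :
    sInf {r : ℝ | ∃ t : ℝ, 1 / (2 * M) ≤ t ∧ r = risk (fun x => exp (-(t * x)))} ≤
      1.2985 ^ 2 * sInf {r : ℝ | ∃ l : ℝ, lam ≤ l ∧ l ≤ lam + 2 * M ∧
        r = risk (fun x => (l - lam) / ((l - lam) + x))} := by
  have hμ0 : ∀ i, 0 < μ i := fun i => (hlam'.trans_le hll).trans_le (hμ i)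
  have hnonneg : ∀ R, 0 ≤ risk R := fun R => by
    rw [hrisk]
    exact sum_nonneg fun i _ => eigenRisk_nonneg (hlam'.le.trans hll) (hμ i) hs _ _
  have hbdd : BddBelow {r : ℝ | ∃ t : ℝ, 1 / (2 * M) ≤ t ∧ r = risk (fun x => exp (-(t * x)))} :=
    ⟨0, by rintro _ ⟨t, -, rfl⟩; exact hnonneg _⟩
  refine Real.le_mul_sInf_of_nonneg (by norm_num) ⟨_, lam, le_rfl, by linarith, rfl⟩ ?_
  rintro _ ⟨l, hl, hlM, rfl⟩
  rcases hl.eq_or_lt with rfl | hl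
  · simp only [sub_self, zero_div]
    refine le_trans ?_ (le_mul_of_one_le_left (hnonneg _) (by norm_num))
    refine ge_of_tendsto (tendsto_risk_exp_neg_mul_atTop hμ0 hrisk) ?_
    filter_upwards [eventually_ge_atTop (1 / (2 * M))] with t ht
    exact csInf_le hbdd ⟨t, ht, rfl⟩
  have hκ : 0 < l - lam := sub_pos.2 hl
  have ht : 1 / (2 * M) ≤ (l - lam)⁻¹ := by
    rw [inv_eq_one_div]
    gcongr
    linarith
  refine (csInf_le hbdd ⟨(l - lam)⁻¹, ht, rfl⟩).trans ?_
  rw [hrisk, hrisk, mul_sum]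
  gcongr with i
  have hfilter := exp_neg_le_ridge_filter hκ (hμ0 i).le
  refine eigenRisk_le_mul (by norm_num) hlam' hll (hμ i) hs (exp_pos _).le ?_ hfilter
    (one_sub_exp_neg_le_mul_one_sub_ridge_filter hκ (hμ0 i).le) _
  exact hfilter.trans (div_le_one_of_le₀ (by linarith [hμ0 i]) (by linarith [hμ0 i]))

end OracleRisk

theorem oracle_gf_le_oracle_ridge_general
    (p : ℕ) (lam lam' : ℝ) (hlam' : 0 < lam') (hll : lam' ≤ lam)
    (Sig : Matrix (Fin p) (Fin p) ℝ) (hSig : Sig.PosSemidef)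
    (Sigl : Matrix (Fin p) (Fin p) ℝ) (hSigl_def : Sigl = Sig + lam • 1)
    (hSigl : Sigl.PosSemidef)
    (beta0 : Fin p → ℝ) (sigma : ℝ) (n : ℕ)
    (betal gam : Fin p → ℝ)
    (hbetal : betal = Sigl⁻¹ *ᵥ (Sig *ᵥ beta0))
    (hgam : gam = (Sig + lam' • 1)⁻¹ *ᵥ (Sig *ᵥ beta0))
    (risk : (ℝ → ℝ) → ℝ)
    (hrisk : ∀ R : ℝ → ℝ,
      risk R = sqnorm (hSigl.isHermitian.cfc Real.sqrt *ᵥ (hSigl.isHermitian.cfc R *ᵥ betal + (gam - betal)))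
        + sigma ^ 2 / n * ((1 - hSigl.isHermitian.cfc R) ^ 2 * Sigl⁻¹ * Sig).trace) :
    sInf {r : ℝ | ∃ t : ℝ, 1 / (2 * opNorm Sigl) ≤ t ∧
        r = risk (fun x => Real.exp (-(t * x)))} ≤
      1.2985 ^ 2 * sInf {r : ℝ | ∃ l : ℝ, lam ≤ l ∧ l ≤ lam + 2 * opNorm Sigl ∧
        r = risk (fun x => (l - lam) / ((l - lam) + x))} := by
  have hμ := hSigl.isHermitian.le_eigenvalues hSig hSigl_def
  exact sInf_risk_exp_le_sInf_risk_ridge hlam' hll (by positivity) hμ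
    (fun R => (hrisk R).trans
      (risk_eq_sum_eigenRisk hSigl.isHermitian hSigl_def hlam' hll hμ hbetal hgam _ R))
    (norm_nonneg _)

/-- the oracle gradient-flow prediction risk (over times
`t ≥ 1/(2‖Σ̂_λ‖)`) is bounded by `1.2985²` times the oracle ridge prediction risk (over
penalties `λ̃ ∈ [λ, λ + 2‖Σ̂_λ‖]`), for the target `γ = β_{λ′}` with `0 < λ′ ≤ λ`. -/
theorem oracle_gf_le_oracle_ridge
    (p : ℕ) (lam lam' : ℝ) (hlam' : 0 < lam') (hll : lam' ≤ lam)
    (Sig : Matrix (Fin p) (Fin p) ℝ) (hSig : Sig.PosSemidef)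
    (hne : Sig ≠ 0 ∨ 0 < lam)
    (Sigl : Matrix (Fin p) (Fin p) ℝ) (hSigl_def : Sigl = Sig + lam • 1)
    (hSigl : Sigl.PosSemidef)
    (beta0 : Fin p → ℝ) (sigma : ℝ) (hsigma : 0 ≤ sigma) (n : ℕ) (hn : 1 ≤ n)
    (betal gam : Fin p → ℝ)
    (hbetal : betal = Sigl⁻¹ *ᵥ (Sig *ᵥ beta0))
    (hgam : gam = (Sig + lam' • 1)⁻¹ *ᵥ (Sig *ᵥ beta0))
    (risk : (ℝ → ℝ) → ℝ)
    (hrisk : ∀ R : ℝ → ℝ,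
      risk R = sqnorm (hSigl.isHermitian.cfc Real.sqrt *ᵥ (hSigl.isHermitian.cfc R *ᵥ betal + (gam - betal)))
        + sigma ^ 2 / n * ((1 - hSigl.isHermitian.cfc R) ^ 2 * Sigl⁻¹ * Sig).trace) :
    sInf {r : ℝ | ∃ t : ℝ, 1 / (2 * opNorm Sigl) ≤ t ∧
        r = risk (fun x => Real.exp (-(t * x)))} ≤
      1.2985 ^ 2 * sInf {r : ℝ | ∃ l : ℝ, lam ≤ l ∧ l ≤ lam + 2 * opNorm Sigl ∧
        r = risk (fun x => (l - lam) / ((l - lam) + x))} :=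
  oracle_gf_le_oracle_ridge_general p lam lam' hlam' hll Sig hSig Sigl hSigl_def hSigl beta0 sigma n
    betal gam hbetal hgam risk hrisk
end
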